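/- arXiv:1612.03510 — 3 statements merged into one kernel-verified Lean document; each statement's English description precedes it below -/
import Mathlib

section
/- Let N ≥ 3 and n ∈ ℕ, and set β_n = (2n+N)(2n+N−2)/(N(N−2)). The radial function W_n(x) = (1 + |x|²)^{−(N−2)/2} · P_n^{((N−2)/2, (N−2)/2)}( (1 − |x|²)/(1 + |x|²) ) satisfies −ΔW_n(x) = β_n · U(x)^{4/(N−2)} · W_n(x) for every x ∈ ℝ^N. -/
open scoped BigOperators

/-- Second directional derivative of `f` at `x` in direction `v`. -/
noncomputable def secondDeriv {E : Type*} [NormedAddCommGroup E] [NormedSpace ℝ E]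
    (f : E → ℝ) (v : E) (x : E) : ℝ :=
  fderiv ℝ (fun y => fderiv ℝ f y v) x v

/-- The Laplacian (sum of second partial derivatives) on `ℝ^N`. -/
noncomputable def laplacian {N : ℕ} (f : EuclideanSpace ℝ (Fin N) → ℝ)
    (x : EuclideanSpace ℝ (Fin N)) : ℝ :=
  ∑ i : Fin N, secondDeriv f (EuclideanSpace.single i 1) x

/-- The standard bubble `U(x) = (N(N-2))^((N-2)/4) (1+|x|^2)^(-(N-2)/2)`. -/
noncomputable def U (N : ℕ) (x : EuclideanSpace ℝ (Fin N)) : ℝ :=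
  ((N : ℝ) * ((N : ℝ) - 2)) ^ (((N : ℝ) - 2) / 4) * (1 + ‖x‖ ^ 2) ^ (-(((N : ℝ) - 2) / 2))

/-- Generalized binomial coefficient `C(a, k) = a(a-1)⋯(a-k+1)/k!`. -/
noncomputable def genBinom (a : ℝ) (k : ℕ) : ℝ :=
  (∏ i ∈ Finset.range k, (a - i)) / (Nat.factorial k)

/-- The Jacobi polynomial `P_m^{(b,c)}`. -/
noncomputable def jacobiP (m : ℕ) (b c : ℝ) (x : ℝ) : ℝ :=
  ∑ s ∈ Finset.range (m + 1),
    genBinom ((m : ℝ) + b) s * genBinom ((m : ℝ) + c) (m - s) *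
      ((x - 1) / 2) ^ (m - s) * ((x + 1) / 2) ^ s

/-- The radial function `W_n`. -/
noncomputable def Wn (N n : ℕ) (x : EuclideanSpace ℝ (Fin N)) : ℝ :=
  (1 + ‖x‖ ^ 2) ^ (-(((N : ℝ) - 2) / 2)) *
    jacobiP n (((N : ℝ) - 2) / 2) (((N : ℝ) - 2) / 2) ((1 - ‖x‖ ^ 2) / (1 + ‖x‖ ^ 2))

/-!
With `t = ‖x‖²`, `α = (N - 2) / 2` and `ξ = (1 - t) / (1 + t)` one has `(ξ - 1) / 2 = -t / (1 + t)`
and `(ξ + 1) / 2 = 1 / (1 + t)`, so `W_n(x) = (1 + t)^{-(α + n)} q(t)` for the polynomial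
`q = ∑ₖ (-1)^k C(n + α, k) C(n + α, n - k) t^k`. The two-term recurrence of these coefficients says
exactly that `q` solves the hypergeometric equation
`t (1 + t) q'' + ((α + 1)(1 + t) - 2 (α + n) t) q' + n (α + n) q = 0`.
For radial functions `Δ g(‖x‖²) = 4 ‖x‖² g'' + 2 N g'`, and for `g = (1 + t)^{-(α + n)} q` this
equation becomes `-Δ W_n = (2n + N)(2n + N - 2) (1 + t)^{-2} W_n`; finally
`U^{4/(N-2)} = N (N - 2) (1 + t)^{-2}`.
-/

open Polynomial Finset

lemma genBinom_succ (a : ℝ) (k : ℕ) : genBinom a (k + 1) = genBinom a k * (a - k) / (k + 1) := by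
  simp only [genBinom, prod_range_succ, Nat.factorial_succ]
  push_cast
  field_simp

noncomputable def jacobiCoeff (n : ℕ) (α : ℝ) (k : ℕ) : ℝ :=
  (-1) ^ k * genBinom (n + α) k * genBinom (n + α) (n - k)

lemma jacobiCoeff_recurrence {n k : ℕ} (α : ℝ) (hk : k < n) :
    (k + 1) * (k + 1 + α) * jacobiCoeff n α (k + 1) + (n - k) * (n - k + α) * jacobiCoeff n α k
      = 0 := by
  obtain ⟨m, rfl⟩ := Nat.exists_eq_add_of_lt hk
  have hnk : k + m + 1 - k = m + 1 := by omega
  have hnk' : k + m + 1 - (k + 1) = m := by omega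
  simp only [jacobiCoeff, hnk, hnk', genBinom_succ, pow_succ]
  push_cast
  field_simp
  ring

noncomputable def jacobiPoly (n : ℕ) (α : ℝ) : ℝ[X] :=
  ∑ k ∈ range (n + 1), C (jacobiCoeff n α k) * X ^ k

lemma jacobiOde_X_pow (n k : ℕ) (α t : ℝ) :
    t * (1 + t) * (derivative (derivative (X ^ k : ℝ[X]))).eval t
      + ((α + 1) * (1 + t) - 2 * (α + n) * t) * (derivative (X ^ k : ℝ[X])).eval t
      + n * (α + n) * t ^ k
      = k * (k + α) * t ^ (k - 1) + (n - k) * (n - k + α) * t ^ k := by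
  rcases k with _ | _ | m
  · simp [add_comm]
  · simp; ring
  · simp; ring

lemma jacobiPoly_ode (n : ℕ) (α t : ℝ) :
    t * (1 + t) * (derivative (derivative (jacobiPoly n α))).eval t
      + ((α + 1) * (1 + t) - 2 * (α + n) * t) * (derivative (jacobiPoly n α)).eval t
      + n * (α + n) * (jacobiPoly n α).eval t = 0 := by
  set a := jacobiCoeff n α
  calc _ = ∑ k ∈ range (n + 1), a k * (k * (k + α) * t ^ (k - 1))
        + ∑ k ∈ range (n + 1), a k * ((n - k) * (n - k + α) * t ^ k) := by
        simp only [jacobiPoly, derivative_sum, derivative_C_mul, eval_finsetSum, eval_mul, eval_C,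
          eval_pow, eval_X, mul_sum, ← sum_add_distrib]
        refine sum_congr rfl fun k _ => ?_
        linear_combination a k * jacobiOde_X_pow n k α t
    _ = ∑ k ∈ range n,
          ((k + 1) * (k + 1 + α) * a (k + 1) + (n - k) * (n - k + α) * a k) * t ^ k := by
        rw [sum_range_succ', sum_range_succ]
        simp only [CharP.cast_eq_zero, zero_mul, mul_zero, sub_self, add_zero, ← sum_add_distrib]
        exact sum_congr rfl fun k _ => by push_cast; ring
    _ = 0 := sum_eq_zero fun k hk => by rw [jacobiCoeff_recurrence α (mem_range.mp hk), zero_mul]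

lemma one_add_pow_mul_jacobiP {t : ℝ} (ht : 1 + t ≠ 0) (n : ℕ) (α : ℝ) :
    (1 + t) ^ n * jacobiP n α α ((1 - t) / (1 + t)) = (jacobiPoly n α).eval t := by
  have hξ₁ : ((1 - t) / (1 + t) - 1) / 2 = -t / (1 + t) := by field_simp; ring
  have hξ₂ : ((1 - t) / (1 + t) + 1) / 2 = 1 / (1 + t) := by field_simp; ring
  rw [jacobiP, hξ₁, hξ₂, ← sum_range_reflect, mul_sum]
  simp only [jacobiPoly, eval_finsetSum, eval_mul, eval_C, eval_pow, eval_X]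
  refine sum_congr rfl fun k hk => ?_
  have hkn : k ≤ n := Nat.lt_succ_iff.mp (mem_range.mp hk)
  rw [show n + 1 - 1 - k = n - k by omega, Nat.sub_sub_self hkn, jacobiCoeff, div_pow, div_pow,
    one_pow, neg_pow, ← Nat.sub_add_cancel hkn, pow_add, Nat.add_sub_cancel]
  field_simp

lemma one_add_rpow_neg_mul_jacobiP {t : ℝ} (ht : 0 < 1 + t) (n : ℕ) (α : ℝ) :
    (1 + t) ^ (-α) * jacobiP n α α ((1 - t) / (1 + t))
      = (1 + t) ^ (-(α + n)) * (jacobiPoly n α).eval t := by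
  rw [← one_add_pow_mul_jacobiP ht.ne' n α, neg_add, Real.rpow_add ht, Real.rpow_neg ht.le (n : ℝ),
    Real.rpow_natCast]
  field_simp

open scoped RealInnerProductSpace

section Radial

variable {g g' : ℝ → ℝ} {g'' : ℝ}

lemma secondDeriv_comp_norm_sq {E : Type*} [NormedAddCommGroup E] [InnerProductSpace ℝ E]
    (hg : ∀ t, 0 ≤ t → HasDerivAt g (g' t) t) {x : E} (hg' : HasDerivAt g' g'' (‖x‖ ^ 2)) (v : E) :
    secondDeriv (fun z => g (‖z‖ ^ 2)) v x
      = g'' * (2 * ⟪x, v⟫) ^ 2 + g' (‖x‖ ^ 2) * (2 * ‖v‖ ^ 2) := by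
  have hcomp : ∀ {h : ℝ → ℝ} {h' : ℝ} (y : E), HasDerivAt h h' (‖y‖ ^ 2) →
      HasFDerivAt (fun z => h (‖z‖ ^ 2)) (h' • 2 • innerSL ℝ y) y :=
    fun y hh => hh.comp_hasFDerivAt y (hasStrictFDerivAt_norm_sq y).hasFDerivAt
  have hfderiv : ∀ y : E, fderiv ℝ (fun z => g (‖z‖ ^ 2)) y v = g' (‖y‖ ^ 2) * (2 * ⟪y, v⟫) := by
    intro y
    rw [(hcomp y (hg _ (sq_nonneg _))).fderiv]
    simp
  have hinner : HasFDerivAt (fun y : E => 2 * ⟪y, v⟫) ((2 : ℝ) • innerSL ℝ v) x := by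
    simpa only [innerSL_apply_apply, real_inner_comm v] using
      (innerSL ℝ v).hasFDerivAt.const_mul (2 : ℝ) (x := x)
  simp only [secondDeriv, hfderiv]
  rw [((hcomp x hg').fun_mul hinner).fderiv]
  simp
  ring

lemma laplacian_comp_norm_sq {N : ℕ} (hg : ∀ t, 0 ≤ t → HasDerivAt g (g' t) t)
    {x : EuclideanSpace ℝ (Fin N)} (hg' : HasDerivAt g' g'' (‖x‖ ^ 2)) :
    laplacian (fun z => g (‖z‖ ^ 2)) x = 4 * ‖x‖ ^ 2 * g'' + 2 * N * g' (‖x‖ ^ 2) := by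
  simp only [laplacian, secondDeriv_comp_norm_sq hg hg', EuclideanSpace.inner_single_right,
    PiLp.norm_single, sum_add_distrib]
  have hsum : ∑ i, g'' * (2 * x i) ^ 2 = 4 * ‖x‖ ^ 2 * g'' := by
    rw [EuclideanSpace.real_norm_sq_eq, mul_sum, sum_mul]
    exact sum_congr rfl fun i _ => by ring
  simp only [one_mul, conj_trivial, norm_one, hsum, sum_const, card_univ, Fintype.card_fin,
    nsmul_eq_mul]
  ring

end Radial

lemma hasDerivAt_one_add_rpow_mul {f : ℝ → ℝ} {f' t : ℝ} (p : ℝ) (hf : HasDerivAt f f' t)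
    (ht : 0 < 1 + t) :
    HasDerivAt (fun s => (1 + s) ^ p * f s) ((1 + t) ^ (p - 1) * (p * f t + (1 + t) * f')) t := by
  have hpow : HasDerivAt (fun s => (1 + s) ^ p) (p * (1 + t) ^ (p - 1)) t := by
    simpa using ((hasDerivAt_id t).const_add 1).rpow_const (p := p) (Or.inl ht.ne')
  refine (hpow.mul hf).congr_deriv ?_
  rw [Real.rpow_sub_one ht.ne']
  field_simp

lemma laplacian_one_add_norm_sq_rpow_mul_eval {N : ℕ} (p : ℝ) (f : ℝ[X])
    (x : EuclideanSpace ℝ (Fin N)) :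
    laplacian (fun z => (1 + ‖z‖ ^ 2) ^ p * f.eval (‖z‖ ^ 2)) x =
      (1 + ‖x‖ ^ 2) ^ p / (1 + ‖x‖ ^ 2) ^ 2 *
        (4 * ‖x‖ ^ 2 * (p * (p - 1) * f.eval (‖x‖ ^ 2)
            + 2 * p * (1 + ‖x‖ ^ 2) * (derivative f).eval (‖x‖ ^ 2)
            + (1 + ‖x‖ ^ 2) ^ 2 * (derivative (derivative f)).eval (‖x‖ ^ 2))
          + 2 * N * (1 + ‖x‖ ^ 2) * (p * f.eval (‖x‖ ^ 2)
            + (1 + ‖x‖ ^ 2) * (derivative f).eval (‖x‖ ^ 2))) := by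
  have hpos : ∀ t : ℝ, 0 ≤ t → 0 < 1 + t := fun t ht => by linarith
  have hf' : HasDerivAt (fun s => p * f.eval s + (1 + s) * (derivative f).eval s)
      (p * (derivative f).eval (‖x‖ ^ 2) + (1 * (derivative f).eval (‖x‖ ^ 2)
        + (1 + ‖x‖ ^ 2) * (derivative (derivative f)).eval (‖x‖ ^ 2))) (‖x‖ ^ 2) :=
    ((f.hasDerivAt _).const_mul p).add
      (((hasDerivAt_id _).const_add 1).mul ((derivative f).hasDerivAt _))
  rw [laplacian_comp_norm_sq
    (fun t ht => hasDerivAt_one_add_rpow_mul p (f.hasDerivAt t) (hpos t ht))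
    (hasDerivAt_one_add_rpow_mul (p - 1) hf' (hpos _ (sq_nonneg _)))]
  have h1 : 1 + ‖x‖ ^ 2 ≠ 0 := (hpos _ (sq_nonneg _)).ne'
  rw [Real.rpow_sub_one h1, Real.rpow_sub_one h1]
  field_simp
  ring

lemma U_rpow_four_div {N : ℕ} (hN : 3 ≤ N) (x : EuclideanSpace ℝ (Fin N)) :
    U N x ^ (4 / ((N : ℝ) - 2)) = N * (N - 2) / (1 + ‖x‖ ^ 2) ^ 2 := by
  have hN' : (0 : ℝ) < N - 2 := by
    have : (2 : ℝ) < N := by exact_mod_cast hN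
    linarith
  have hNN : (0 : ℝ) < N * (N - 2) := by positivity
  have ht : (0 : ℝ) < 1 + ‖x‖ ^ 2 := by positivity
  have hexp₁ : ((N : ℝ) - 2) / 4 * (4 / (N - 2)) = 1 := by field_simp
  have hexp₂ : -(((N : ℝ) - 2) / 2) * (4 / (N - 2)) = -(2 : ℕ) := by field_simp; norm_num
  rw [U, Real.mul_rpow (by positivity) (by positivity), ← Real.rpow_mul hNN.le,
    ← Real.rpow_mul ht.le, hexp₁, hexp₂, Real.rpow_one, Real.rpow_neg ht.le, Real.rpow_natCast,
    div_eq_mul_inv]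

theorem statement3 (N n : ℕ) (hN : 3 ≤ N) :
    ∀ x : EuclideanSpace ℝ (Fin N),
      -laplacian (Wn N n) x =
        ((2 * (n : ℝ) + N) * (2 * (n : ℝ) + N - 2) / ((N : ℝ) * ((N : ℝ) - 2))) *
          U N x ^ ((4 : ℝ) / ((N : ℝ) - 2)) * Wn N n x := by
  intro x
  have hW : Wn N n = fun z => (1 + ‖z‖ ^ 2) ^ (-(((N : ℝ) - 2) / 2 + n))
      * (jacobiPoly n (((N : ℝ) - 2) / 2)).eval (‖z‖ ^ 2) :=
    funext fun z => one_add_rpow_neg_mul_jacobiP (by positivity) n _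
  have hN' : (0 : ℝ) < N - 2 := by
    have : (2 : ℝ) < N := by exact_mod_cast hN
    linarith
  have hβ : (2 * (n : ℝ) + N) * (2 * n + N - 2) / (N * (N - 2))
      * (N * (N - 2) / (1 + ‖x‖ ^ 2) ^ 2) = (2 * n + N) * (2 * n + N - 2) / (1 + ‖x‖ ^ 2) ^ 2 := by
    field_simp
  rw [hW, laplacian_one_add_norm_sq_rpow_mul_eval, U_rpow_four_div hN, hβ]
  linear_combination (-4 * (1 + ‖x‖ ^ 2) * (1 + ‖x‖ ^ 2) ^ (-(((N : ℝ) - 2) / 2 + n))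
    / (1 + ‖x‖ ^ 2) ^ 2) * jacobiPoly_ode n (((N : ℝ) - 2) / 2) (‖x‖ ^ 2)
end

section
/- Let N ≥ 1 and 1 ≤ m ≤ N, and write points of ℝ^N as x = (x′, x_{N−m+1}, …, x_N) with x′ ∈ ℝ^{N−m}. A polynomial function p : ℝ^N → ℝ satisfies p(g x′, x_{N−m+1}, …, x_N) = p(x′, x_{N−m+1}, …, x_N) for every orthogonal transformation g of ℝ^{N−m}, and changes sign under each of the m reflections x_{N+1−i} ↦ −x_{N+1−i} (i = 1, …, m), if and only if there exists a real polynomial q in m+1 variables such that p(x) = x_{N−m+1} ⋯ x_N · q(|x′|², x_{N−m+1}², …, x_N²) for all x ∈ ℝ^N. -/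
/-!
Rotation invariance makes `p (x', y)` depend on `x'` only through `‖x'‖`, so
`p (x', y) = ψ (‖x'‖, y)`, where `ψ (t, y) := p (t • v, y)` for a fixed unit vector `v`
(or `v = 0` when `N = m`) is a polynomial in `m + 1` variables.
Since `ψ` is even in `t` and odd in each `y i`, every monomial of `ψ` has even degree in `t` and odd
degree in each `y i`; halving the exponents yields `q`.
-/

namespace MvPolynomial

section Reflection

variable {R σ : Type*} [CommRing R] [DecidableEq σ]

theorem bind₁_update_neg_monomial (j : σ) (d : σ →₀ ℕ) (c : R) :
    bind₁ (Function.update X j (-X j)) (monomial d c) = monomial d ((-1) ^ d j * c) := by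
  have hpow : ∀ i, Function.update (X : σ → MvPolynomial σ R) j (-X j) i ^ d i
      = (if i = j then (-1) ^ d i else 1) * X i ^ d i := by
    intro i
    rcases eq_or_ne i j with rfl | h
    · rw [Function.update_self, if_pos rfl, neg_pow]
    · simp [h]
  rw [bind₁_monomial, Finset.prod_congr rfl fun i _ => hpow i, Finset.prod_mul_distrib,
    Finset.prod_ite_eq', monomial_eq, Finsupp.prod, C_mul, ← mul_assoc, mul_comm (C c)]
  split_ifs with hj
  · simp
  · simp [Finsupp.notMem_support_iff.mp hj]

theorem coeff_bind₁_update_neg (j : σ) (ψ : MvPolynomial σ R) (d : σ →₀ ℕ) :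
    coeff d (bind₁ (Function.update X j (-X j)) ψ) = (-1) ^ d j * coeff d ψ := by
  induction ψ using MvPolynomial.induction_on' with
  | monomial d' c =>
    rw [bind₁_update_neg_monomial, coeff_monomial, coeff_monomial]
    split_ifs with h <;> simp [h]
  | add ψ φ hψ hφ => rw [map_add, coeff_add, coeff_add, hψ, hφ, mul_add]

theorem mod_two_eq_of_eval_update_neg [IsDomain R] [Infinite R] (hR : (-1 : R) ≠ 1)
    {ψ : MvPolynomial σ R} {j : σ} {k : ℕ}
    (h : ∀ x, eval (Function.update x j (-x j)) ψ = (-1) ^ k * eval x ψ)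
    {d : σ →₀ ℕ} (hd : d ∈ ψ.support) : d j % 2 = k % 2 := by
  have hflip : bind₁ (Function.update X j (-X j)) ψ = C ((-1) ^ k) * ψ := by
    refine MvPolynomial.funext fun x => ?_
    refine (eval₂Hom_bind₁ (RingHom.id R) x _ ψ).trans ?_
    simpa [Function.apply_update (fun _ => eval x)] using h x
  have hsign : (-1 : R) ^ d j = (-1) ^ k := by
    have := coeff_bind₁_update_neg j ψ d
    rw [hflip, coeff_C_mul] at this
    exact mul_right_cancel₀ (mem_support_iff.mp hd) this.symm
  rw [neg_one_pow_eq_pow_mod_two, neg_one_pow_eq_pow_mod_two (n := k)] at hsign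
  rcases Nat.mod_two_eq_zero_or_one (d j) with h1 | h1 <;>
    rcases Nat.mod_two_eq_zero_or_one k with h2 | h2 <;> simp_all [eq_comm]

end Reflection

theorem exists_eval_eq_prod_pow_mul_eval_sq {R σ : Type*} [CommSemiring R] [Fintype σ]
    (ψ : MvPolynomial σ R) (r : σ → ℕ) (hr : ∀ d ∈ ψ.support, ∀ i, d i % 2 = r i) :
    ∃ q : MvPolynomial σ R, ∀ x, eval x ψ = (∏ i, x i ^ r i) * eval (fun i => x i ^ 2) q := by
  refine ⟨∑ d ∈ ψ.support, monomial (d.mapRange (· / 2) (Nat.zero_div 2)) (coeff d ψ),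
    fun x => ?_⟩
  conv_lhs => rw [ψ.as_sum]
  simp only [map_sum, Finset.mul_sum, eval_monomial]
  refine Finset.sum_congr rfl fun d hd => ?_
  rw [Finsupp.prod_fintype _ _ fun i => pow_zero _, Finsupp.prod_fintype _ _ fun i => pow_zero _,
    mul_left_comm, ← Finset.prod_mul_distrib]
  congr 1
  refine Finset.prod_congr rfl fun i _ => ?_
  rw [Finsupp.mapRange_apply, ← pow_mul, ← pow_add]
  congr 1
  have := hr d hd i
  omega

theorem exists_eval_cons_eq_eval_sumElim_smul {R ι : Type*} [CommSemiring R] {m : ℕ}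
    (P : MvPolynomial (ι ⊕ Fin m) R) (v : ι → R) :
    ∃ ψ : MvPolynomial (Fin (m + 1)) R,
      ∀ t y, eval (Fin.cons t y) ψ = eval (Sum.elim (t • v) y) P := by
  refine ⟨bind₁ (Sum.elim (fun i => C (v i) * X 0) (fun j => X j.succ)) P, fun t y => ?_⟩
  refine (eval₂Hom_bind₁ (RingHom.id R) _ _ P).trans (congr_arg (eval · P) ?_)
  ext (i | j) <;> simp [mul_comm]

theorem exists_eval_cons_eq_prod_mul_eval_sq {R : Type*} [CommRing R] [IsDomain R] [Infinite R]
    (hR : (-1 : R) ≠ 1) {m : ℕ} (ψ : MvPolynomial (Fin (m + 1)) R)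
    (heven : ∀ t y, eval (Fin.cons (-t) y) ψ = eval (Fin.cons t y) ψ)
    (hodd : ∀ i t y, eval (Fin.cons t (Function.update y i (-y i))) ψ = -eval (Fin.cons t y) ψ) :
    ∃ q : MvPolynomial (Fin (m + 1)) R, ∀ t y,
      eval (Fin.cons t y) ψ = (∏ i, y i) * eval (Fin.cons (t ^ 2) fun i => y i ^ 2) q := by
  have hparity : ∀ d ∈ ψ.support, ∀ j, d j % 2 = (Fin.cons 0 fun _ => 1 : Fin (m + 1) → ℕ) j := by
    intro d hd j
    refine Fin.cases ?_ (fun i => ?_) j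
    · refine mod_two_eq_of_eval_update_neg hR (k := 0) (fun x => ?_) hd
      induction x using Fin.consCases with
      | cons t y => simp [Fin.update_cons_zero, heven]
    · refine mod_two_eq_of_eval_update_neg hR (k := 1) (fun x => ?_) hd
      induction x using Fin.consCases with
      | cons t y => simp [← Fin.cons_update, hodd]
  obtain ⟨q, hq⟩ := exists_eval_eq_prod_pow_mul_eval_sq ψ _ hparity
  refine ⟨q, fun t y => ?_⟩
  rw [hq, Fin.prod_univ_succ]
  simp only [Fin.cons_zero, Fin.cons_succ, pow_zero, pow_one, one_mul]
  exact congrArg (_ * eval · q) (Fin.comp_cons (· ^ 2) t y)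

end MvPolynomial

theorem exists_norm_norm_smul_eq_norm (E : Type*) [NormedAddCommGroup E] [NormedSpace ℝ E] :
    ∃ v : E, ∀ x : E, ‖‖x‖ • v‖ = ‖x‖ := by
  rcases subsingleton_or_nontrivial E with hE | hE
  · exact ⟨0, fun x => by simp [Subsingleton.elim x 0]⟩
  · obtain ⟨w, hw⟩ := exists_ne (0 : E)
    exact ⟨‖w‖⁻¹ • w, fun x => by simp [norm_smul, hw]⟩

theorem apply_eq_of_norm_eq {E α : Type*} [NormedAddCommGroup E] [InnerProductSpace ℝ E]
    {f : E → α} (hf : ∀ (g : E ≃ₗᵢ[ℝ] E) x, f (g x) = f x) {a b : E} (h : ‖a‖ = ‖b‖) :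
    f a = f b := by
  rw [← Submodule.reflection_sub h, hf]

theorem Fintype.prod_update_neg {ι R : Type*} [Fintype ι] [DecidableEq ι] [CommRing R]
    (y : ι → R) (i : ι) : ∏ j, Function.update y i (-y i) j = -∏ j, y j := by
  rw [Finset.prod_update_of_mem (Finset.mem_univ i), Finset.sdiff_singleton_eq_erase, neg_mul,
    Finset.mul_prod_erase _ _ (Finset.mem_univ i)]

open MvPolynomial

theorem statement13_general (N m : ℕ)
    (p : EuclideanSpace ℝ (Fin (N - m)) × (Fin m → ℝ) → ℝ)
    (hpoly : ∃ P : MvPolynomial (Fin (N - m) ⊕ Fin m) ℝ,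
      ∀ x : EuclideanSpace ℝ (Fin (N - m)) × (Fin m → ℝ),
        p x = MvPolynomial.eval (Sum.elim (fun i => x.1 i) x.2) P) :
    ((∀ g : EuclideanSpace ℝ (Fin (N - m)) ≃ₗᵢ[ℝ] EuclideanSpace ℝ (Fin (N - m)),
        ∀ x' y, p (g x', y) = p (x', y)) ∧
      (∀ i : Fin m, ∀ x' y, p (x', Function.update y i (-(y i))) = -p (x', y))) ↔
    ∃ q : MvPolynomial (Fin (m + 1)) ℝ,
      ∀ x' y, p (x', y) =
        (∏ i, y i) * MvPolynomial.eval (Fin.cons (‖x'‖ ^ 2) fun i => (y i) ^ 2) q := by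
  constructor
  · rintro ⟨hrot, hrefl⟩
    obtain ⟨P, hP⟩ := hpoly
    obtain ⟨v, hv⟩ := exists_norm_norm_smul_eq_norm (EuclideanSpace ℝ (Fin (N - m)))
    obtain ⟨ψ, hψ⟩ := exists_eval_cons_eq_eval_sumElim_smul P (fun i => v i)
    have hψp : ∀ t y, eval (Fin.cons t y) ψ = p (t • v, y) := by
      intro t y
      rw [hψ, hP]
      rfl
    have hradial : ∀ a b, ‖a‖ = ‖b‖ → ∀ y, p (a, y) = p (b, y) := fun a b h y =>
      apply_eq_of_norm_eq (f := fun a => p (a, y)) (fun g x => hrot g x y) h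
    obtain ⟨q, hq⟩ := exists_eval_cons_eq_prod_mul_eval_sq (by norm_num) ψ
      (fun t y => by rw [hψp, hψp, neg_smul]; exact hradial _ _ (norm_neg _) y)
      (fun i t y => by rw [hψp, hψp, hrefl])
    exact ⟨q, fun x' y => by rw [hradial x' (‖x'‖ • v) (hv x').symm, ← hψp, hq]⟩
  · rintro ⟨q, hq⟩
    refine ⟨fun g x' y => by rw [hq, hq, g.norm_map], fun i x' y => ?_⟩
    have hsq : (fun j => Function.update y i (-y i) j ^ 2) = fun j => y j ^ 2 := by
      ext j
      rcases eq_or_ne j i with rfl | h <;> simp [*]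
    rw [hq, hq, hsq, Fintype.prod_update_neg, neg_mul]

theorem statement13 (N m : ℕ) (hN : 1 ≤ N) (hm : 1 ≤ m) (hmN : m ≤ N)
    (p : EuclideanSpace ℝ (Fin (N - m)) × (Fin m → ℝ) → ℝ)
    (hpoly : ∃ P : MvPolynomial (Fin (N - m) ⊕ Fin m) ℝ,
      ∀ x : EuclideanSpace ℝ (Fin (N - m)) × (Fin m → ℝ),
        p x = MvPolynomial.eval (Sum.elim (fun i => x.1 i) x.2) P) :
    ((∀ g : EuclideanSpace ℝ (Fin (N - m)) ≃ₗᵢ[ℝ] EuclideanSpace ℝ (Fin (N - m)),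
        ∀ x' y, p (g x', y) = p (x', y)) ∧
      (∀ i : Fin m, ∀ x' y, p (x', Function.update y i (-(y i))) = -p (x', y))) ↔
    ∃ q : MvPolynomial (Fin (m + 1)) ℝ,
      ∀ x' y, p (x', y) =
        (∏ i, y i) * MvPolynomial.eval (Fin.cons (‖x'‖ ^ 2) fun i => (y i) ^ 2) q :=
  statement13_general N m p hpoly
end

section
/- Let N ≥ 2 and k ∈ ℕ. The real vector space of harmonic polynomial functions on ℝ^N that are homogeneous of degree k and invariant under every orthogonal transformation of ℝ^{N−1} acting on the first N−1 coordinates (i.e. p(g x′, x_N) = p(x′, x_N) for all g ∈ O(N−1)) has dimension exactly 1. -/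
open scoped BigOperators

/-- The Laplacian (sum of second partial derivatives) on `ℝ^k × ℝ`. -/
noncomputable def laplacianProd (k : ℕ)
    (f : EuclideanSpace ℝ (Fin k) × ℝ → ℝ) (x : EuclideanSpace ℝ (Fin k) × ℝ) : ℝ :=
  (∑ i : Fin k, secondDeriv f (EuclideanSpace.single i 1, 0) x) +
    secondDeriv f ((0 : EuclideanSpace ℝ (Fin k)), 1) x

/-- `p` is a polynomial function on `ℝ^k × ℝ`. -/
def IsPolyFun (k : ℕ) (p : EuclideanSpace ℝ (Fin k) × ℝ → ℝ) : Prop :=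
  ∃ P : MvPolynomial (Fin k ⊕ Fin 1) ℝ,
    ∀ x : EuclideanSpace ℝ (Fin k) × ℝ,
      p x = MvPolynomial.eval (Sum.elim (fun i => x.1 i) (fun _ => x.2)) P

/-- `p` is (positively) homogeneous of degree `d`. -/
def IsHomOfDeg (k d : ℕ) (p : EuclideanSpace ℝ (Fin k) × ℝ → ℝ) : Prop :=
  ∀ c : ℝ, 0 < c → ∀ x, p (c • x) = c ^ d * p x

/-- `p` is harmonic, i.e. its Laplacian vanishes identically. -/
def IsHarm (k : ℕ) (p : EuclideanSpace ℝ (Fin k) × ℝ → ℝ) : Prop :=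
  ∀ x, laplacianProd k p x = 0

/-- `p` is invariant under every orthogonal transformation of the first factor. -/
def IsOInvariant (k : ℕ) (p : EuclideanSpace ℝ (Fin k) × ℝ → ℝ) : Prop :=
  ∀ g : EuclideanSpace ℝ (Fin k) ≃ₗᵢ[ℝ] EuclideanSpace ℝ (Fin k),
    ∀ x' t, p (g x', t) = p (x', t)

/-- The continuous linear coordinate map `ℝ^k × ℝ → (Fin k ⊕ Fin 1 → ℝ)`. -/
noncomputable def coordCLM (k : ℕ) :
    (EuclideanSpace ℝ (Fin k) × ℝ) →L[ℝ] (Fin k ⊕ Fin 1 → ℝ) :=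
  ContinuousLinearMap.pi fun j =>
    Sum.elim
      (fun i => (EuclideanSpace.proj i).comp
        (ContinuousLinearMap.fst ℝ (EuclideanSpace ℝ (Fin k)) ℝ))
      (fun _ => ContinuousLinearMap.snd ℝ (EuclideanSpace ℝ (Fin k)) ℝ) j

lemma coordCLM_apply (k : ℕ) (x : EuclideanSpace ℝ (Fin k) × ℝ) :
    coordCLM k x = Sum.elim (fun i => x.1 i) (fun _ => x.2) := by
  funext j; cases j <;> rfl

lemma IsPolyFun.contDiff2 {k : ℕ} {p : EuclideanSpace ℝ (Fin k) × ℝ → ℝ}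
    (hp : IsPolyFun k p) : ContDiff ℝ 2 p := by
  obtain ⟨P, hP⟩ := hp
  have hfun : p = fun x => MvPolynomial.eval (coordCLM k x) P := by
    funext x; rw [hP x, coordCLM_apply]
  rw [hfun]
  exact (AnalyticOnNhd.eval_continuousLinearMap (coordCLM k) P).contDiff

lemma secondDeriv_add {E : Type*} [NormedAddCommGroup E] [NormedSpace ℝ E]
    {p q : E → ℝ} (hp : ContDiff ℝ 2 p) (hq : ContDiff ℝ 2 q) (v x : E) :
    secondDeriv (p + q) v x = secondDeriv p v x + secondDeriv q v x := by
  have hp1 : Differentiable ℝ p := hp.differentiable (by norm_num)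
  have hq1 : Differentiable ℝ q := hq.differentiable (by norm_num)
  have hpf : Differentiable ℝ (fun y => fderiv ℝ p y v) := fun y =>
    (((hp.fderiv_right (m := 1) (by norm_num)).differentiable (by norm_num)) y).clm_apply
      (differentiableAt_const v)
  have hqf : Differentiable ℝ (fun y => fderiv ℝ q y v) := fun y =>
    (((hq.fderiv_right (m := 1) (by norm_num)).differentiable (by norm_num)) y).clm_apply
      (differentiableAt_const v)
  have e1 : (fun y => fderiv ℝ (p + q) y v) =
      fun y => fderiv ℝ p y v + fderiv ℝ q y v := by
    funext y
    have h : (p + q) = fun z => p z + q z := rfl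
    rw [h, fderiv_fun_add (hp1 y) (hq1 y)]
    rfl
  unfold secondDeriv
  rw [e1, fderiv_fun_add (hpf x) (hqf x)]
  rfl

lemma secondDeriv_smul {E : Type*} [NormedAddCommGroup E] [NormedSpace ℝ E]
    {p : E → ℝ} (hp : ContDiff ℝ 2 p) (a : ℝ) (v x : E) :
    secondDeriv (a • p) v x = a * secondDeriv p v x := by
  have hp1 : Differentiable ℝ p := hp.differentiable (by norm_num)
  have hpf : Differentiable ℝ (fun y => fderiv ℝ p y v) := fun y =>
    (((hp.fderiv_right (m := 1) (by norm_num)).differentiable (by norm_num)) y).clm_apply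
      (differentiableAt_const v)
  have e1 : (fun y => fderiv ℝ (a • p) y v) = fun y => a * fderiv ℝ p y v := by
    funext y
    have h : (a • p) = fun z => a * p z := by
      funext z; simp [Pi.smul_apply, smul_eq_mul]
    rw [h, fderiv_const_mul (hp1 y) a]
    simp
  unfold secondDeriv
  rw [e1, fderiv_const_mul (hpf x) a]
  simp

/-- The space of `O(k)`-invariant harmonic polynomial functions on `ℝ^k × ℝ`,
homogeneous of degree `d`. -/
noncomputable def zonalSpace (k d : ℕ) :
    Submodule ℝ ((EuclideanSpace ℝ (Fin k) × ℝ) → ℝ) where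
  carrier := {p | IsPolyFun k p ∧ IsHomOfDeg k d p ∧ IsHarm k p ∧ IsOInvariant k p}
  zero_mem' := by
    refine ⟨⟨0, by simp⟩, fun c hc x => by simp, fun x => ?_, fun g x' t => rfl⟩
    have h2 : ∀ v : EuclideanSpace ℝ (Fin k) × ℝ,
        secondDeriv (0 : (EuclideanSpace ℝ (Fin k) × ℝ) → ℝ) v x = 0 := by
      intro v
      have h0 : (fun y : EuclideanSpace ℝ (Fin k) × ℝ =>
          fderiv ℝ (0 : (EuclideanSpace ℝ (Fin k) × ℝ) → ℝ) y v) = fun _ => 0 := by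
        funext y
        have hz : (0 : (EuclideanSpace ℝ (Fin k) × ℝ) → ℝ) = fun _ => (0 : ℝ) := rfl
        rw [hz, fderiv_fun_const]
        simp
      unfold secondDeriv
      rw [h0]
      simp
    simp [laplacianProd, h2]
  add_mem' := by
    rintro p q ⟨hPp, hpH, hpL, hpG⟩ ⟨hPq, hqH, hqL, hqG⟩
    have hcp := hPp.contDiff2
    have hcq := hPq.contDiff2
    obtain ⟨P, hP⟩ := hPp
    obtain ⟨Q, hQ⟩ := hPq
    refine ⟨⟨P + Q, fun x => by simp [Pi.add_apply, hP x, hQ x]⟩, fun c hc x => ?_,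
      fun x => ?_, fun g x' t => ?_⟩
    · simp only [Pi.add_apply, hpH c hc x, hqH c hc x]; ring
    · have h1 := hpL x
      have h2 := hqL x
      simp only [laplacianProd, secondDeriv_add hcp hcq] at h1 h2 ⊢
      rw [Finset.sum_add_distrib]
      linarith
    · simp only [Pi.add_apply, hpG g x' t, hqG g x' t]
  smul_mem' := by
    rintro a p ⟨hPp, hpH, hpL, hpG⟩
    have hcp := hPp.contDiff2
    obtain ⟨P, hP⟩ := hPp
    refine ⟨⟨MvPolynomial.C a * P, fun x => by
        simp [Pi.smul_apply, smul_eq_mul, hP x]⟩, fun c hc x => ?_,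
      fun x => ?_, fun g x' t => ?_⟩
    · simp only [Pi.smul_apply, smul_eq_mul, hpH c hc x]; ring
    · have h1 := hpL x
      simp only [laplacianProd, secondDeriv_smul hcp a] at h1 ⊢
      rw [← Finset.mul_sum]
      linear_combination a * h1
    · simp only [Pi.smul_apply, smul_eq_mul, hpG g x' t]

/-!
By `O(N-1)`-invariance such a `p` depends on `x'` only through `|x'|`, so it is determined by
its restriction `Q(s, t) = p(s e₀, t)` to a plane through the `x_N`-axis. The reflection
`s ↦ -s` makes `Q` even in `s`, and homogeneity makes it homogeneous of degree `k`, hence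
`p = ∑_{2j ≤ k} a_j |x'|^{2j} x_N^{k-2j}`. Since
`Δ (|x'|^{2j} x_N^n) = 2j(2j+N-3) |x'|^{2j-2} x_N^n + n(n-1) |x'|^{2j} x_N^{n-2}`,
`p` is harmonic iff `2(l+1)(2l+N-1) a_{l+1} + (k-2l)(k-2l-1) a_l = 0` for `2l < k`. The leading
coefficient never vanishes, so `a_0` determines `p`, and the solution with `a_0 = 1` spans.
-/

noncomputable section

open Finset

namespace MvPolynomial

variable {σ R : Type*}

lemma coeff_bind₁_C_mul_X [CommSemiring R] (r : σ → R) (Q : MvPolynomial σ R) (d : σ →₀ ℕ) :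
    coeff d (bind₁ (fun i => C (r i) * X i) Q) = d.prod (fun i e => r i ^ e) * coeff d Q := by
  classical
  induction Q using MvPolynomial.induction_on' with
  | monomial e b =>
    have hmon : bind₁ (fun i => C (r i) * X i) (monomial e b) =
        monomial e (e.prod (fun i n => r i ^ n) * b) := by
      rw [bind₁_monomial, monomial_eq, Finsupp.prod, Finsupp.prod]
      simp only [mul_pow, prod_mul_distrib, ← map_pow, ← map_prod, C_mul]
      ring
    rw [hmon, coeff_monomial, coeff_monomial]
    split_ifs with h
    · rw [h]
    · rw [mul_zero]
  | add Q₁ Q₂ h₁ h₂ => rw [map_add, coeff_add, coeff_add, h₁, h₂, mul_add]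

lemma prod_pow_mul_coeff_of_eval_mul {K : Type*} [Field K] [Infinite K] {Q : MvPolynomial σ K}
    {r : σ → K} {c : K} (h : ∀ v, eval (fun i => r i * v i) Q = c * eval v Q) (d : σ →₀ ℕ) :
    d.prod (fun i e => r i ^ e) * coeff d Q = c * coeff d Q := by
  have hQ : bind₁ (fun i => C (r i) * X i) Q = C c * Q :=
    funext fun v => by
      rw [eval_mul, eval_C, ← h]
      exact (eval₂Hom_bind₁ _ _ _ _).trans (by simp)
  rw [← coeff_bind₁_C_mul_X, hQ, coeff_C_mul]

lemma eval_eq_sum_of_even_of_degree_eq [CommSemiring R] {Q : MvPolynomial (Fin 2) R} {k : ℕ}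
    (hQ : ∀ d ∈ Q.support, Even (d 0) ∧ d 0 + d 1 = k) (v : Fin 2 → R) :
    eval v Q = ∑ j ∈ range (k / 2 + 1),
      coeff (Finsupp.single 0 (2 * j) + Finsupp.single 1 (k - 2 * j)) Q * v 0 ^ (2 * j) *
        v 1 ^ (k - 2 * j) := by
  set e : ℕ → Fin 2 →₀ ℕ := fun j => Finsupp.single 0 (2 * j) + Finsupp.single 1 (k - 2 * j)
  have he0 (j : ℕ) : e j 0 = 2 * j := by simp [e]
  have he1 (j : ℕ) : e j 1 = k - 2 * j := by simp [e]
  have hsupp : Q.support ⊆ (range (k / 2 + 1)).image e := by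
    intro d hd
    obtain ⟨⟨j, hj⟩, hdeg⟩ := hQ d hd
    exact mem_image.2 ⟨j, mem_range.2 (by omega),
      Finsupp.ext (Fin.forall_fin_two.2 ⟨(he0 j).trans (by omega), (he1 j).trans (by omega)⟩)⟩
  rw [eval_eq', sum_subset hsupp fun d _ hd => by rw [notMem_support_iff.1 hd, zero_mul],
    sum_image fun j₁ _ j₂ _ h => by simpa [he0] using congrArg (· 0) h]
  refine sum_congr rfl fun j _ => ?_
  rw [Fin.prod_univ_two, he0, he1]
  ring

end MvPolynomial

lemma eq_zero_of_forall_sum_mul_pow_eq_zero {J : ℕ} {c : ℕ → ℝ}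
    (h : ∀ u : ℝ, 0 ≤ u → ∑ l ∈ range J, c l * u ^ l = 0) {l : ℕ} (hl : l < J) : c l = 0 := by
  set p : Polynomial ℝ := ∑ l ∈ range J, Polynomial.C (c l) * Polynomial.X ^ l
  have hp : p = 0 := Polynomial.eq_zero_of_infinite_isRoot p <|
    (Set.Ici_infinite 0).mono fun u hu => by simp [p, Polynomial.eval_finsetSum, h u hu]
  simpa [p, Polynomial.finsetSum_coeff, Polynomial.coeff_C_mul_X_pow, hl] using
    congrArg (Polynomial.coeff · l) hp

lemma secondDeriv_eq_of_hasFDerivAt {E : Type*} [NormedAddCommGroup E] [NormedSpace ℝ E]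
    {f g : E → ℝ} {g' : E →L[ℝ] ℝ} {v x : E} (hfg : ∀ y, fderiv ℝ f y v = g y)
    (hg : HasFDerivAt g g' x) : secondDeriv f v x = g' v := by
  rw [secondDeriv, funext hfg, hg.fderiv]

lemma secondDeriv_sum {E ι : Type*} [NormedAddCommGroup E] [NormedSpace ℝ E]
    (s : Finset ι) (a : ι → ℝ) {f : ι → E → ℝ} (hf : ∀ i ∈ s, ContDiff ℝ 2 (f i)) (v x : E) :
    secondDeriv (fun y => ∑ i ∈ s, a i * f i y) v x = ∑ i ∈ s, a i * secondDeriv (f i) v x := by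
  classical
  induction s using Finset.induction with
  | empty => simp [secondDeriv]
  | insert i s hi ih =>
    have hfi : ContDiff ℝ 2 (f i) := hf i (mem_insert_self i s)
    have hfs : ∀ j ∈ s, ContDiff ℝ 2 (f j) := fun j hj => hf j (mem_insert_of_mem hj)
    have hsplit : (fun y => ∑ j ∈ insert i s, a j * f j y) =
        a i • f i + fun y => ∑ j ∈ s, a j * f j y := by
      funext y
      rw [sum_insert hi]
      rfl
    have hsmul : ContDiff ℝ 2 (a i • f i) := contDiff_const.smul hfi
    have hsum : ContDiff ℝ 2 fun y => ∑ j ∈ s, a j * f j y :=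
      ContDiff.sum fun j hj => contDiff_const.mul (hfs j hj)
    rw [hsplit, secondDeriv_add hsmul hsum, secondDeriv_smul hfi, ih hfs,
      sum_insert hi]

variable {m : ℕ}

lemma laplacianProd_sum {ι : Type*} (s : Finset ι) (a : ι → ℝ)
    {f : ι → EuclideanSpace ℝ (Fin m) × ℝ → ℝ} (hf : ∀ i ∈ s, ContDiff ℝ 2 (f i))
    (x : EuclideanSpace ℝ (Fin m) × ℝ) :
    laplacianProd m (fun y => ∑ i ∈ s, a i * f i y) x = ∑ i ∈ s, a i * laplacianProd m (f i) x := by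
  simp only [laplacianProd, secondDeriv_sum s a hf, mul_add, sum_add_distrib, mul_sum]
  rw [sum_comm]

def zonalMonomial (m j n : ℕ) (x : EuclideanSpace ℝ (Fin m) × ℝ) : ℝ :=
  (‖x.1‖ ^ 2) ^ j * x.2 ^ n

lemma hasFDerivAt_normSq_fst (x : EuclideanSpace ℝ (Fin m) × ℝ) :
    HasFDerivAt (fun y : EuclideanSpace ℝ (Fin m) × ℝ => ‖y.1‖ ^ 2)
      (2 • (innerSL ℝ x.1).comp (ContinuousLinearMap.fst ℝ _ ℝ)) x :=
  hasFDerivAt_fst.norm_sq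

lemma contDiff_zonalMonomial (j n : ℕ) : ContDiff ℝ 2 (zonalMonomial m j n) :=
  ((contDiff_norm_sq ℝ).comp contDiff_fst |>.pow j).mul (contDiff_snd.pow n)

lemma fderiv_zonalMonomial_apply (j n : ℕ) (y v : EuclideanSpace ℝ (Fin m) × ℝ) :
    fderiv ℝ (zonalMonomial m j n) y v =
      j * (‖y.1‖ ^ 2) ^ (j - 1) * (2 * inner ℝ y.1 v.1) * y.2 ^ n +
        (‖y.1‖ ^ 2) ^ j * (n * y.2 ^ (n - 1) * v.2) := by
  have h : HasFDerivAt (zonalMonomial m j n) _ y :=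
    ((hasFDerivAt_normSq_fst y).pow j).mul (hasFDerivAt_snd.pow n)
  rw [h.fderiv]
  simp only [add_apply, smul_apply,
    ContinuousLinearMap.comp_apply, ContinuousLinearMap.coe_fst', ContinuousLinearMap.coe_snd',
    coe_innerSL_apply, nsmul_eq_mul, smul_eq_mul]
  ring

lemma fderiv_zonalMonomial_single (j n : ℕ) (i : Fin m) (y : EuclideanSpace ℝ (Fin m) × ℝ) :
    fderiv ℝ (zonalMonomial m j n) y (EuclideanSpace.single i 1, 0) =
      2 * j * ((‖y.1‖ ^ 2) ^ (j - 1) * (y.1 i * y.2 ^ n)) := by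
  rw [fderiv_zonalMonomial_apply, EuclideanSpace.inner_single_right]
  simp only [one_mul, conj_trivial, mul_zero, add_zero]
  ring

lemma fderiv_zonalMonomial_snd (j n : ℕ) (y : EuclideanSpace ℝ (Fin m) × ℝ) :
    fderiv ℝ (zonalMonomial m j n) y (0, 1) = n * ((‖y.1‖ ^ 2) ^ j * y.2 ^ (n - 1)) := by
  rw [fderiv_zonalMonomial_apply]
  simp only [inner_zero_right, mul_zero, zero_mul, zero_add, mul_one]
  ring

lemma secondDeriv_zonalMonomial_single (j n : ℕ) (i : Fin m) (x : EuclideanSpace ℝ (Fin m) × ℝ) :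
    secondDeriv (zonalMonomial m j n) (EuclideanSpace.single i 1, 0) x =
      2 * j * (2 * (j - 1 : ℕ) * (‖x.1‖ ^ 2) ^ (j - 1 - 1) * x.1 i ^ 2 + (‖x.1‖ ^ 2) ^ (j - 1))
        * x.2 ^ n := by
  have hcoord : HasFDerivAt (fun y : EuclideanSpace ℝ (Fin m) × ℝ => y.1 i)
      ((EuclideanSpace.proj i).comp (ContinuousLinearMap.fst ℝ _ ℝ)) x :=
    ((EuclideanSpace.proj i).comp (ContinuousLinearMap.fst ℝ _ ℝ)).hasFDerivAt
  rw [secondDeriv_eq_of_hasFDerivAt (fderiv_zonalMonomial_single j n i)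
    ((((hasFDerivAt_normSq_fst x).pow (j - 1)).mul (hcoord.mul (hasFDerivAt_snd.pow n))).const_mul
      (2 * j))]
  simp only [add_apply, smul_apply,
    ContinuousLinearMap.comp_apply, ContinuousLinearMap.coe_fst', ContinuousLinearMap.coe_snd',
    coe_innerSL_apply, EuclideanSpace.inner_single_right, PiLp.proj_apply, PiLp.single_eq_same,
    nsmul_eq_mul, smul_eq_mul, smul_add, Pi.mul_apply, Real.ringHom_apply]
  ring

lemma secondDeriv_zonalMonomial_snd (j n : ℕ) (x : EuclideanSpace ℝ (Fin m) × ℝ) :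
    secondDeriv (zonalMonomial m j n) (0, 1) x =
      (n * (n - 1) : ℕ) * (‖x.1‖ ^ 2) ^ j * x.2 ^ (n - 2) := by
  rw [secondDeriv_eq_of_hasFDerivAt (fderiv_zonalMonomial_snd j n)
    ((((hasFDerivAt_normSq_fst x).pow j).mul (hasFDerivAt_snd.pow (n - 1))).const_mul n)]
  simp only [add_apply, smul_apply,
    ContinuousLinearMap.comp_apply, ContinuousLinearMap.coe_fst', ContinuousLinearMap.coe_snd',
    coe_innerSL_apply, inner_zero_right, nsmul_eq_mul, smul_eq_mul, smul_add,
    show n - 1 - 1 = n - 2 by omega]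
  push_cast
  ring

lemma laplacianProd_zonalMonomial (j n : ℕ) (x : EuclideanSpace ℝ (Fin m) × ℝ) :
    laplacianProd m (zonalMonomial m j n) x =
      2 * j * (2 * j + m - 2) * (‖x.1‖ ^ 2) ^ (j - 1) * x.2 ^ n +
        (n * (n - 1) : ℕ) * (‖x.1‖ ^ 2) ^ j * x.2 ^ (n - 2) := by
  simp only [laplacianProd, secondDeriv_zonalMonomial_single, secondDeriv_zonalMonomial_snd,
    ← sum_mul, ← mul_sum, sum_add_distrib, ← EuclideanSpace.real_norm_sq_eq, sum_const,
    card_univ, Fintype.card_fin, nsmul_eq_mul]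
  rcases j with _ | _ | j
  · simp
  · simp
  · push_cast
    simp only [pow_succ]
    ring

def zonalPoly (m k : ℕ) (a : ℕ → ℝ) : EuclideanSpace ℝ (Fin m) × ℝ → ℝ :=
  fun x => ∑ j ∈ range (k / 2 + 1), a j * zonalMonomial m j (k - 2 * j) x

def zonalRecurrence (m k : ℕ) (a : ℕ → ℝ) (l : ℕ) : ℝ :=
  2 * (l + 1) * (2 * l + m) * a (l + 1) + ((k - 2 * l) * (k - 2 * l - 1) : ℕ) * a l

lemma laplacianProd_zonalPoly (k : ℕ) (a : ℕ → ℝ) (x : EuclideanSpace ℝ (Fin m) × ℝ) :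
    laplacianProd m (zonalPoly m k a) x =
      ∑ l ∈ range (k / 2), zonalRecurrence m k a l * (‖x.1‖ ^ 2) ^ l * x.2 ^ (k - 2 * l - 2) := by
  unfold zonalPoly
  rw [laplacianProd_sum _ _ fun j _ => contDiff_zonalMonomial j _]
  simp only [laplacianProd_zonalMonomial, mul_add, sum_add_distrib]
  rw [sum_range_succ', sum_range_succ _ (k / 2)]
  have hlast : (k - 2 * (k / 2)) * (k - 2 * (k / 2) - 1) = 0 := Nat.mul_eq_zero.mpr (by omega)
  simp only [hlast, CharP.cast_eq_zero, mul_zero, zero_mul, add_zero, ← sum_add_distrib]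
  refine sum_congr rfl fun l _ => ?_
  rw [zonalRecurrence, show k - 2 * (l + 1) = k - 2 * l - 2 by omega]
  push_cast
  ring

lemma zonalRecurrence_eq_zero_of_isHarm [NeZero m] {k : ℕ} {a : ℕ → ℝ}
    (h : IsHarm m (zonalPoly m k a)) {l : ℕ} (hl : l < k / 2) : zonalRecurrence m k a l = 0 := by
  refine eq_zero_of_forall_sum_mul_pow_eq_zero (fun u hu => ?_) hl
  have hu' : ‖√u • EuclideanSpace.single (0 : Fin m) (1 : ℝ)‖ ^ 2 = u := by
    simp [norm_smul, Real.sq_sqrt hu]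
  have hx := h (√u • EuclideanSpace.single (0 : Fin m) (1 : ℝ), 1)
  simpa [laplacianProd_zonalPoly, hu'] using hx

def zonalCoeff (m k : ℕ) : ℕ → ℝ
  | 0 => 1
  | l + 1 => -((k - 2 * l) * (k - 2 * l - 1) : ℕ) / (2 * (l + 1) * (2 * l + m)) * zonalCoeff m k l

lemma zonalDenominator_ne_zero [NeZero m] (l : ℕ) : (2 * (l + 1) * (2 * l + m) : ℝ) ≠ 0 := by
  have : (0 : ℝ) < m := by exact_mod_cast Nat.pos_of_neZero m
  positivity

lemma zonalRecurrence_zonalCoeff [NeZero m] (k l : ℕ) :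
    zonalRecurrence m k (zonalCoeff m k) l = 0 := by
  rw [zonalRecurrence, zonalCoeff, div_mul_eq_mul_div, mul_div_assoc',
    mul_div_cancel_left₀ _ (zonalDenominator_ne_zero l)]
  ring

lemma eq_mul_zonalCoeff_of_zonalRecurrence [NeZero m] {k : ℕ} {a : ℕ → ℝ}
    (h : ∀ l < k / 2, zonalRecurrence m k a l = 0) : ∀ j ≤ k / 2, a j = a 0 * zonalCoeff m k j
  | 0, _ => by simp [zonalCoeff]
  | l + 1, hl => by
    have ih := eq_mul_zonalCoeff_of_zonalRecurrence h l (by omega)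
    have hrec := h l (by omega)
    rw [zonalRecurrence] at hrec
    rw [zonalCoeff, div_mul_eq_mul_div, mul_div_assoc', eq_div_iff (zonalDenominator_ne_zero l)]
    linear_combination hrec - ((k - 2 * l) * (k - 2 * l - 1) : ℕ) * ih

lemma zonalPoly_eq_smul_zonalCoeff [NeZero m] {k : ℕ} {a : ℕ → ℝ}
    (h : ∀ l < k / 2, zonalRecurrence m k a l = 0) :
    zonalPoly m k a = a 0 • zonalPoly m k (zonalCoeff m k) := by
  funext x
  simp only [zonalPoly, Pi.smul_apply, smul_eq_mul, mul_sum]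
  refine sum_congr rfl fun j hj => ?_
  rw [eq_mul_zonalCoeff_of_zonalRecurrence h j (Nat.lt_succ_iff.1 (mem_range.1 hj)), mul_assoc]

lemma zonalPoly_apply_zero_one (k : ℕ) (a : ℕ → ℝ) : zonalPoly m k a (0, 1) = a 0 := by
  rw [zonalPoly, sum_eq_single_of_mem 0 (by simp) fun j _ hj => by simp [zonalMonomial, hj]]
  simp [zonalMonomial]

lemma isPolyFun_zonalPoly (k : ℕ) (a : ℕ → ℝ) : IsPolyFun m (zonalPoly m k a) := by
  refine ⟨∑ j ∈ range (k / 2 + 1), MvPolynomial.C (a j) *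
      (∑ i, MvPolynomial.X (Sum.inl i) ^ 2) ^ j * MvPolynomial.X (Sum.inr 0) ^ (k - 2 * j),
    fun x => ?_⟩
  simp [zonalPoly, zonalMonomial, EuclideanSpace.real_norm_sq_eq, mul_assoc]

lemma zonalMonomial_smul (c : ℝ) (j n : ℕ) (x : EuclideanSpace ℝ (Fin m) × ℝ) :
    zonalMonomial m j n (c • x) = c ^ (2 * j + n) * zonalMonomial m j n x := by
  simp only [zonalMonomial, Prod.smul_fst, Prod.smul_snd, norm_smul, Real.norm_eq_abs, smul_eq_mul,
    mul_pow, sq_abs, pow_add, pow_mul]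
  ring

lemma isHomOfDeg_zonalPoly (k : ℕ) (a : ℕ → ℝ) : IsHomOfDeg m k (zonalPoly m k a) := by
  intro c _ x
  simp only [zonalPoly, zonalMonomial_smul, mul_sum]
  refine sum_congr rfl fun j hj => ?_
  rw [show 2 * j + (k - 2 * j) = k by have := mem_range.1 hj; omega]
  ring

lemma isOInvariant_zonalPoly (k : ℕ) (a : ℕ → ℝ) : IsOInvariant m (zonalPoly m k a) := by
  intro g x' t
  simp [zonalPoly, zonalMonomial]

lemma zonalPoly_mem_zonalSpace_iff [NeZero m] {k : ℕ} {a : ℕ → ℝ} :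
    zonalPoly m k a ∈ zonalSpace m k ↔ ∀ l < k / 2, zonalRecurrence m k a l = 0 := by
  refine ⟨fun h _ hl => zonalRecurrence_eq_zero_of_isHarm h.2.2.1 hl, fun h => ?_⟩
  refine ⟨isPolyFun_zonalPoly k a, isHomOfDeg_zonalPoly k a, fun x => ?_,
    isOInvariant_zonalPoly k a⟩
  rw [laplacianProd_zonalPoly]
  exact sum_eq_zero fun l hl => by rw [h l (mem_range.1 hl), zero_mul, zero_mul]

lemma IsOInvariant.apply_eq_of_norm_eq {p : EuclideanSpace ℝ (Fin m) × ℝ → ℝ}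
    (hp : IsOInvariant m p) {x y : EuclideanSpace ℝ (Fin m)} (h : ‖x‖ = ‖y‖) (t : ℝ) :
    p (x, t) = p (y, t) := by
  rw [← Submodule.reflection_sub h, hp]

lemma IsPolyFun.exists_eval_eq_smul {p : EuclideanSpace ℝ (Fin m) × ℝ → ℝ} (hp : IsPolyFun m p)
    (u : EuclideanSpace ℝ (Fin m)) :
    ∃ Q : MvPolynomial (Fin 2) ℝ, ∀ v, MvPolynomial.eval v Q = p (v 0 • u, v 1) := by
  obtain ⟨P, hP⟩ := hp
  refine ⟨MvPolynomial.bind₁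
    (Sum.elim (fun i => MvPolynomial.C (u i) * MvPolynomial.X 0) fun _ => MvPolynomial.X 1) P,
    fun v => ?_⟩
  rw [hP]
  refine (MvPolynomial.eval₂Hom_bind₁ _ _ _ _).trans (congrArg (MvPolynomial.eval · P) ?_)
  funext i
  rcases i with i | i <;> simp [mul_comm]

lemma IsOInvariant.coeff_eq_zero_of_odd {p : EuclideanSpace ℝ (Fin m) × ℝ → ℝ}
    (hinv : IsOInvariant m p) {u : EuclideanSpace ℝ (Fin m)} {Q : MvPolynomial (Fin 2) ℝ}
    (hQ : ∀ v, MvPolynomial.eval v Q = p (v 0 • u, v 1)) {d : Fin 2 →₀ ℕ} (hd : Odd (d 0)) :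
    MvPolynomial.coeff d Q = 0 := by
  have h := MvPolynomial.prod_pow_mul_coeff_of_eval_mul (r := ![-1, 1]) (c := 1) (Q := Q)
    (fun v => by simpa [hQ] using hinv.apply_eq_of_norm_eq (norm_neg (v 0 • u)) (v 1)) d
  rw [Finsupp.prod_fintype _ _ (by simp), Fin.prod_univ_two] at h
  simp only [Matrix.cons_val_zero, Matrix.cons_val_one, Matrix.cons_val_fin_one, hd.neg_one_pow,
    one_pow, mul_one, neg_one_mul, one_mul] at h
  linarith

lemma IsHomOfDeg.degree_eq_of_mem_support {k : ℕ} {p : EuclideanSpace ℝ (Fin m) × ℝ → ℝ}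
    (hhom : IsHomOfDeg m k p) {u : EuclideanSpace ℝ (Fin m)} {Q : MvPolynomial (Fin 2) ℝ}
    (hQ : ∀ v, MvPolynomial.eval v Q = p (v 0 • u, v 1)) {d : Fin 2 →₀ ℕ} (hd : d ∈ Q.support) :
    d 0 + d 1 = k := by
  have h := MvPolynomial.prod_pow_mul_coeff_of_eval_mul (r := ![2, 2]) (c := 2 ^ k) (Q := Q)
    (fun v => by
      simp only [hQ, Matrix.cons_val_zero, Matrix.cons_val_one, Matrix.cons_val_fin_one]
      rw [← hhom 2 two_pos, Prod.smul_mk, smul_smul, smul_eq_mul]) d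
  rw [Finsupp.prod_fintype _ _ (by simp), Fin.prod_univ_two] at h
  simp only [Matrix.cons_val_zero, Matrix.cons_val_one, Matrix.cons_val_fin_one, ← pow_add] at h
  exact pow_right_injective₀ two_pos (by norm_num)
    (mul_right_cancel₀ (MvPolynomial.mem_support_iff.1 hd) h)

theorem exists_eq_zonalPoly [NeZero m] {k : ℕ} {p : EuclideanSpace ℝ (Fin m) × ℝ → ℝ}
    (hpoly : IsPolyFun m p) (hhom : IsHomOfDeg m k p) (hinv : IsOInvariant m p) :
    ∃ a, p = zonalPoly m k a := by
  set e₀ := EuclideanSpace.single (0 : Fin m) (1 : ℝ)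
  obtain ⟨Q, hQ⟩ := hpoly.exists_eval_eq_smul e₀
  have hsupp : ∀ d ∈ Q.support, Even (d 0) ∧ d 0 + d 1 = k := fun d hd =>
    ⟨Nat.not_odd_iff_even.1 fun h =>
      MvPolynomial.mem_support_iff.1 hd (hinv.coeff_eq_zero_of_odd hQ h),
      hhom.degree_eq_of_mem_support hQ hd⟩
  refine ⟨fun j => MvPolynomial.coeff (Finsupp.single 0 (2 * j) + Finsupp.single 1 (k - 2 * j)) Q,
    funext fun ⟨x', t⟩ => ?_⟩
  rw [hinv.apply_eq_of_norm_eq (y := ‖x'‖ • e₀) (by simp [norm_smul, e₀]) t,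
    show (‖x'‖ • e₀, t) = (![‖x'‖, t] 0 • e₀, ![‖x'‖, t] 1) from rfl, ← hQ,
    MvPolynomial.eval_eq_sum_of_even_of_degree_eq hsupp]
  simp [zonalPoly, zonalMonomial, pow_mul, mul_assoc]

theorem zonalSpace_eq_span [NeZero m] (k : ℕ) :
    zonalSpace m k = ℝ ∙ zonalPoly m k (zonalCoeff m k) := by
  have hmem : zonalPoly m k (zonalCoeff m k) ∈ zonalSpace m k :=
    zonalPoly_mem_zonalSpace_iff.2 fun l _ => zonalRecurrence_zonalCoeff k l
  refine le_antisymm (fun p hp => ?_) ((Submodule.span_singleton_le_iff_mem _ _).2 hmem)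
  obtain ⟨a, rfl⟩ := exists_eq_zonalPoly hp.1 hp.2.1 hp.2.2.2
  rw [zonalPoly_eq_smul_zonalCoeff (zonalPoly_mem_zonalSpace_iff.1 hp)]
  exact Submodule.smul_mem _ _ (Submodule.mem_span_singleton_self _)

lemma zonalPoly_zonalCoeff_ne_zero (k : ℕ) : zonalPoly m k (zonalCoeff m k) ≠ 0 := fun h => by
  simpa [zonalCoeff] using (zonalPoly_apply_zero_one k (zonalCoeff m k)).symm.trans (congrFun h _)

end

theorem statement19 (N k : ℕ) (hN : 2 ≤ N) :
    Module.finrank ℝ ↥(zonalSpace (N - 1) k) = 1 := by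
  have : NeZero (N - 1) := ⟨by omega⟩
  rw [zonalSpace_eq_span, finrank_span_singleton (zonalPoly_zonalCoeff_ne_zero k)]
end
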